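/- The limit c_k := lim_{n→∞} M(k,n)/n exists for every positive integer k. -/

import Mathlib

/-!
Concatenating a reduced word of `w₀ ∈ S_m`, a reduced word of the permutation exchanging the
first `n` and the last `m` positions, and a reduced word of `w₀ ∈ S_n` (both acting on initial
segments of `Fin (n + m)`) gives a word for `w₀ ∈ S_{n+m}` whose length
`C(m,2) + n m + C(n,2) = C(n+m,2)` is the inversion number of `w₀`, so it is reduced. Hence
`M(k, ·)` is superadditive.

Along a reduced word every letter creates an inversion, so each occurrence of `s_k` moves a
larger value into the first `k` positions. The sum of the first `k` entries of the prefix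
products thus grows at every occurrence of `s_k` and is unchanged by the other letters; as it
never exceeds `k n`, we get `M(k, n) ≤ k n`. Fekete's lemma now gives the limit.
-/

/-- The simple transposition `s_i = (i, i+1)` (1-indexed values) in `S_n`,
realized on `Fin n` (0-indexed positions `i-1` and `i`); junk value `1` otherwise. -/
def sgen (n i : ℕ) : Equiv.Perm (Fin n) :=
  if h : 0 < i ∧ i < n then Equiv.swap ⟨i - 1, by omega⟩ ⟨i, h.2⟩ else 1

/-- `l` is a reduced word for `w ∈ S_n`: its product is `w` and it has minimal length. -/
def IsReducedWordFor (n : ℕ) (l : List ℕ) (w : Equiv.Perm (Fin n)) : Prop :=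
  (l.map (sgen n)).prod = w ∧
    ∀ l' : List ℕ, (l'.map (sgen n)).prod = w → l.length ≤ l'.length

/-- The longest permutation `w_0 = n (n-1) ⋯ 2 1` of `S_n`. -/
def longestPerm (n : ℕ) : Equiv.Perm (Fin n) := Fin.revPerm

/-- `M(k,n)`: the maximum multiplicity of `s_k` among reduced words of `w_0 ∈ S_n`. -/
noncomputable def Mmax (k n : ℕ) : ℕ :=
  sSup {N | ∃ l : List ℕ, IsReducedWordFor n l (longestPerm n) ∧ l.count k = N}

/-- Two finite sets are weakly separated. -/
def WeaklySeparated (I J : Finset ℕ) : Prop :=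
  (∀ a ∈ I \ J, ∀ b ∈ J \ I, a < b) ∨ (∀ b ∈ J \ I, ∀ a ∈ I \ J, b < a)

/-- A monotone weakly separated path: pairwise weakly separated, and each step removes
one element `y` and adds one element `x > y`. -/
def IsMWSPath (P : List (Finset ℕ)) : Prop :=
  (∀ A ∈ P, ∀ B ∈ P, WeaklySeparated A B) ∧
    List.Chain' (fun A B => ∃ x y, y ∈ A ∧ x ∉ A ∧ y < x ∧ B = insert x (A.erase y)) P

open Finset

lemma Finset.sum_comp_swap_of_mem_iff {α M : Type*} [DecidableEq α] [AddCommMonoid M]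
    {s : Finset α} {a b : α} (h : a ∈ s ↔ b ∈ s) (f : α → M) :
    ∑ x ∈ s, f (Equiv.swap a b x) = ∑ x ∈ s, f x := by
  by_cases ha : a ∈ s
  · refine Equiv.Perm.sum_comp _ s f fun x hx => ?_
    by_contra hxs
    exact hx (Equiv.swap_apply_of_ne_of_ne (by rintro rfl; exact hxs ha)
      (by rintro rfl; exact hxs (h.mp ha)))
  · refine sum_congr rfl fun x hx => congrArg f (Equiv.swap_apply_of_ne_of_ne ?_ ?_) <;>
      rintro rfl <;> simp_all

lemma Finset.sum_comp_swap_add_of_mem_of_notMem {α M : Type*} [DecidableEq α] [AddCommMonoid M]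
    {s : Finset α} {a b : α} (ha : a ∈ s) (hb : b ∉ s) (f : α → M) :
    ∑ x ∈ s, f (Equiv.swap a b x) + f a = ∑ x ∈ s, f x + f b := by
  have hrest : ∑ x ∈ s.erase a, f (Equiv.swap a b x) = ∑ x ∈ s.erase a, f x :=
    sum_congr rfl fun x hx => congrArg f (Equiv.swap_apply_of_ne_of_ne (ne_of_mem_erase hx)
      (by rintro rfl; exact hb (mem_of_mem_erase hx)))
  rw [← add_sum_erase s _ ha, ← add_sum_erase s _ ha, hrest, Equiv.swap_apply_left]
  abel

lemma Nat.add_choose_two (n m : ℕ) : (n + m).choose 2 = n.choose 2 + n * m + m.choose 2 := by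
  induction m with
  | zero => simp
  | succ m ih =>
    rw [← add_assoc, Nat.choose_succ_succ', Nat.choose_succ_succ' m, ih, Nat.choose_one_right,
      Nat.choose_one_right]
    ring

variable {n : ℕ}

-- Inversions are recorded as pairs of values, so that right multiplication by `sgen n j`
-- changes the set by exactly one pair.
def inversions (w : Equiv.Perm (Fin n)) : Finset (Fin n × Fin n) :=
  {p | p.1 < p.2 ∧ w⁻¹ p.2 < w⁻¹ p.1}

def inversionCount (w : Equiv.Perm (Fin n)) : ℕ := #(inversions w)

lemma mem_inversions {w : Equiv.Perm (Fin n)} {x y : Fin n} :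
    (x, y) ∈ inversions w ↔ x < y ∧ w⁻¹ y < w⁻¹ x := by
  simp [inversions]

lemma inversionCount_one : inversionCount (1 : Equiv.Perm (Fin n)) = 0 := by
  rw [inversionCount, card_eq_zero, inversions, filter_eq_empty_iff]
  rintro ⟨x, y⟩ - ⟨hxy, hyx⟩
  exact lt_asymm hxy hyx

lemma sgen_eq_swap {j : ℕ} (h1 : 0 < j) (h2 : j < n) :
    sgen n j = Equiv.swap ⟨j - 1, by omega⟩ ⟨j, h2⟩ :=
  dif_pos ⟨h1, h2⟩

lemma sgen_eq_one {j : ℕ} (h : ¬ (0 < j ∧ j < n)) : sgen n j = 1 :=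
  dif_neg h

lemma sgen_mul_self (n j : ℕ) : sgen n j * sgen n j = 1 := by
  by_cases h : 0 < j ∧ j < n
  · rw [sgen_eq_swap h.1 h.2, Equiv.swap_mul_self]
  · rw [sgen_eq_one h, mul_one]

lemma inversions_mul_sgen_of_lt {w : Equiv.Perm (Fin n)} {j : ℕ} (h1 : 0 < j) (h2 : j < n)
    (h : w ⟨j - 1, by omega⟩ < w ⟨j, h2⟩) :
    inversions (w * sgen n j) = insert (w ⟨j - 1, by omega⟩, w ⟨j, h2⟩) (inversions w) := by
  ext ⟨x, y⟩
  obtain ⟨u, rfl⟩ := w.surjective x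
  obtain ⟨v, rfl⟩ := w.surjective y
  rw [sgen_eq_swap h1 h2]
  simp only [mem_insert, mem_inversions, mul_inv_rev, Equiv.swap_inv, Equiv.Perm.mul_apply,
    Equiv.Perm.coe_inv, Equiv.symm_apply_apply, Prod.mk.injEq, w.injective.eq_iff,
    Equiv.swap_apply_def]
  split_ifs <;> subst_vars <;>
    simp only [Fin.lt_def, Fin.ext_iff, and_true, true_or, iff_true] at * <;> omega

lemma inversionCount_mul_sgen_of_lt {w : Equiv.Perm (Fin n)} {j : ℕ} (h1 : 0 < j) (h2 : j < n)
    (h : w ⟨j - 1, by omega⟩ < w ⟨j, h2⟩) :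
    inversionCount (w * sgen n j) = inversionCount w + 1 := by
  have hnew : (w ⟨j - 1, by omega⟩, w ⟨j, h2⟩) ∉ inversions w := by
    simp only [mem_inversions, Equiv.Perm.coe_inv, Equiv.symm_apply_apply, Fin.mk_lt_mk]
    omega
  rw [inversionCount, inversions_mul_sgen_of_lt h1 h2 h, card_insert_of_notMem hnew,
    inversionCount]

lemma inversionCount_mul_sgen_of_gt {w : Equiv.Perm (Fin n)} {j : ℕ} (h1 : 0 < j) (h2 : j < n)
    (h : w ⟨j, h2⟩ < w ⟨j - 1, by omega⟩) :
    inversionCount (w * sgen n j) + 1 = inversionCount w := by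
  have h' : (w * sgen n j) ⟨j - 1, by omega⟩ < (w * sgen n j) ⟨j, h2⟩ := by
    simpa [sgen_eq_swap h1 h2] using h
  rw [← inversionCount_mul_sgen_of_lt h1 h2 h', mul_assoc, sgen_mul_self, mul_one]

lemma inversionCount_mul_sgen_le (w : Equiv.Perm (Fin n)) (j : ℕ) :
    inversionCount (w * sgen n j) ≤ inversionCount w + 1 := by
  by_cases hj : 0 < j ∧ j < n
  · obtain ⟨h1, h2⟩ := hj
    rcases lt_or_gt_of_ne (w.injective.ne (a₁ := ⟨j - 1, by omega⟩) (a₂ := ⟨j, h2⟩)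
      (Fin.ne_of_val_ne (Nat.sub_one_lt h1.ne').ne)) with h | h
    · exact (inversionCount_mul_sgen_of_lt h1 h2 h).le
    · have := inversionCount_mul_sgen_of_gt h1 h2 h
      omega
  · simp [sgen_eq_one hj]

lemma lt_of_inversionCount_mul_sgen {w : Equiv.Perm (Fin n)} {j : ℕ} (h1 : 0 < j) (h2 : j < n)
    (h : inversionCount (w * sgen n j) = inversionCount w + 1) :
    w ⟨j - 1, by omega⟩ < w ⟨j, h2⟩ := by
  refine lt_of_le_of_ne (not_lt.mp fun hgt => ?_)
    (w.injective.ne (Fin.ne_of_val_ne (Nat.sub_one_lt h1.ne').ne))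
  have := inversionCount_mul_sgen_of_gt h1 h2 hgt
  omega

lemma inversionCount_mul_prod_le (w : Equiv.Perm (Fin n)) (l : List ℕ) :
    inversionCount (w * (l.map (sgen n)).prod) ≤ inversionCount w + l.length := by
  induction l generalizing w with
  | nil => simp
  | cons j l ih =>
    rw [List.map_cons, List.prod_cons, ← mul_assoc, List.length_cons]
    have := inversionCount_mul_sgen_le w j
    grind

lemma inversionCount_le_length {w : Equiv.Perm (Fin n)} {l : List ℕ}
    (h : (l.map (sgen n)).prod = w) : inversionCount w ≤ l.length := by
  have := inversionCount_mul_prod_le (1 : Equiv.Perm (Fin n)) l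
  rwa [one_mul, h, inversionCount_one, zero_add] at this

lemma exists_word_length_eq_inversionCount (w : Equiv.Perm (Fin n)) :
    ∃ l : List ℕ, (l.map (sgen n)).prod = w ∧ l.length = inversionCount w := by
  induction hN : inversionCount w using Nat.strong_induction_on generalizing w with
  | _ N ih =>
  by_cases hdesc : ∃ j, ∃ (h1 : 0 < j) (h2 : j < n), w ⟨j, h2⟩ < w ⟨j - 1, by omega⟩
  · obtain ⟨j, h1, h2, hlt⟩ := hdesc
    have hcount := inversionCount_mul_sgen_of_gt h1 h2 hlt
    obtain ⟨l, hprod, hlen⟩ := ih _ (by omega) (w * sgen n j) rfl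
    refine ⟨l ++ [j], ?_, ?_⟩
    · simp [hprod, mul_assoc, sgen_mul_self]
    · rw [List.length_append, hlen, List.length_singleton]
      omega
  · push Not at hdesc
    have hmono : Monotone w := by
      cases n with
      | zero => exact fun a => a.elim0
      | succ m =>
        refine Fin.monotone_iff_le_succ.mpr fun i => ?_
        have h1 : (⟨i + 1 - 1, by omega⟩ : Fin (m + 1)) = i.castSucc := Fin.ext (by simp)
        have h2 : (⟨i + 1, by omega⟩ : Fin (m + 1)) = i.succ := rfl
        simpa only [h1, h2] using hdesc (i + 1) (by omega) (by omega)
    have hw : w = 1 := Equiv.ext fun x => (hmono.strictMono_of_injective w.injective).apply_eq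
    exact ⟨[], by simp [hw], by simp [← hN, hw, inversionCount_one]⟩

lemma isReducedWordFor_iff {l : List ℕ} {w : Equiv.Perm (Fin n)} :
    IsReducedWordFor n l w ↔ (l.map (sgen n)).prod = w ∧ l.length = inversionCount w := by
  refine ⟨fun ⟨hprod, hmin⟩ => ⟨hprod, le_antisymm ?_ (inversionCount_le_length hprod)⟩,
    fun ⟨hprod, hlen⟩ => ⟨hprod, fun l' hl' => hlen ▸ inversionCount_le_length hl'⟩⟩
  obtain ⟨l', hprod', hlen'⟩ := exists_word_length_eq_inversionCount w
  exact hlen' ▸ hmin l' hprod'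

lemma pos_and_lt_of_mem_of_isReducedWordFor {l : List ℕ} {w : Equiv.Perm (Fin n)}
    (hl : IsReducedWordFor n l w) {i : ℕ} (hi : i ∈ l) : 0 < i ∧ i < n := by
  by_contra hc
  obtain ⟨s, t, rfl⟩ := List.append_of_mem hi
  have hprod : ((s ++ t).map (sgen n)).prod = w := by
    simpa [sgen_eq_one hc] using hl.1
  simpa using hl.2 _ hprod

lemma bddAbove_counts (k n : ℕ) :
    BddAbove {N | ∃ l : List ℕ, IsReducedWordFor n l (longestPerm n) ∧ l.count k = N} := by
  refine ⟨inversionCount (longestPerm n), ?_⟩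
  rintro _ ⟨l, hl, rfl⟩
  exact (isReducedWordFor_iff.mp hl).2 ▸ List.count_le_length

lemma count_le_Mmax {k : ℕ} {l : List ℕ} (hl : IsReducedWordFor n l (longestPerm n)) :
    l.count k ≤ Mmax k n :=
  le_csSup (bddAbove_counts k n) ⟨l, hl, rfl⟩

lemma exists_isReducedWordFor_count_eq_Mmax (k n : ℕ) :
    ∃ l, IsReducedWordFor n l (longestPerm n) ∧ l.count k = Mmax k n := by
  obtain ⟨l, hprod, hlen⟩ := exists_word_length_eq_inversionCount (longestPerm n)
  exact Nat.sSup_mem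
    (s := {N | ∃ l : List ℕ, IsReducedWordFor n l (longestPerm n) ∧ l.count k = N})
    ⟨_, l, isReducedWordFor_iff.mpr ⟨hprod, hlen⟩, rfl⟩ (bddAbove_counts k n)

def sumFirstEntries (k : ℕ) (w : Equiv.Perm (Fin n)) : ℕ :=
  ∑ p : Fin n with p.val < k, (w p : ℕ)

lemma sumFirstEntries_le (k : ℕ) (w : Equiv.Perm (Fin n)) : sumFirstEntries k w ≤ k * n := by
  calc sumFirstEntries k w ≤ #{p : Fin n | p.val < k} * n :=
        sum_le_card_nsmul _ _ _ fun p _ => (w p).isLt.le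
    _ ≤ k * n := by
        rw [Fin.card_filter_val_lt]
        exact Nat.mul_le_mul_right n (min_le_right n k)

lemma sumFirstEntries_add_le_mul_sgen (k : ℕ) {w : Equiv.Perm (Fin n)} {j : ℕ}
    (h : inversionCount (w * sgen n j) = inversionCount w + 1) :
    sumFirstEntries k w + (if j = k then 1 else 0) ≤ sumFirstEntries k (w * sgen n j) := by
  have hj : 0 < j ∧ j < n := by
    by_contra hj
    simp [sgen_eq_one hj] at h
  obtain ⟨h1, h2⟩ := hj
  have hlt := lt_of_inversionCount_mul_sgen h1 h2 h
  simp only [sumFirstEntries, sgen_eq_swap h1 h2, Equiv.Perm.mul_apply]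
  split_ifs with hjk
  · subst hjk
    have := Finset.sum_comp_swap_add_of_mem_of_notMem (s := {p : Fin n | p.val < j})
      (a := ⟨j - 1, by omega⟩) (b := ⟨j, h2⟩)
      ((mem_filter_univ _).mpr (by dsimp only; omega)) (by simp) (fun p => (w p : ℕ))
    simp only [Fin.lt_def] at hlt
    omega
  · rw [Finset.sum_comp_swap_of_mem_iff (by simp only [mem_filter_univ]; omega)
      (fun p => (w p : ℕ)), add_zero]

lemma sumFirstEntries_add_count_le (k : ℕ) (w : Equiv.Perm (Fin n)) (l : List ℕ)
    (h : inversionCount (w * (l.map (sgen n)).prod) = inversionCount w + l.length) :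
    sumFirstEntries k w + l.count k ≤ sumFirstEntries k (w * (l.map (sgen n)).prod) := by
  induction l generalizing w with
  | nil => simp
  | cons j l ih =>
    rw [List.map_cons, List.prod_cons, ← mul_assoc] at h ⊢
    have hstep := inversionCount_mul_sgen_le w j
    have hrest := inversionCount_mul_prod_le (w * sgen n j) l
    rw [List.length_cons] at h
    have := sumFirstEntries_add_le_mul_sgen k (w := w) (j := j) (by omega)
    have := ih (w * sgen n j) (by omega)
    rw [List.count_cons]
    simp only [beq_iff_eq] at *
    omega

lemma count_le_mul_of_isReducedWordFor {l : List ℕ} {w : Equiv.Perm (Fin n)}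
    (hl : IsReducedWordFor n l w) (k : ℕ) : l.count k ≤ k * n := by
  obtain ⟨hprod, hlen⟩ := isReducedWordFor_iff.mp hl
  have := sumFirstEntries_add_count_le k 1 l
    (by rw [one_mul, hprod, hlen, inversionCount_one, zero_add])
  have := sumFirstEntries_le k (1 * (l.map (sgen n)).prod)
  omega

lemma Mmax_le_mul (k n : ℕ) : Mmax k n ≤ k * n := by
  obtain ⟨l, hl, hcount⟩ := exists_isReducedWordFor_count_eq_Mmax k n
  exact hcount ▸ count_le_mul_of_isReducedWordFor hl k

def blockSwap (n m : ℕ) : Equiv.Perm (Fin (n + m)) where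
  toFun x := ⟨if x < n then x + m else x - n, by split_ifs <;> omega⟩
  invFun y := ⟨if y < m then y + n else y - m, by split_ifs <;> omega⟩
  left_inv x := Fin.ext (by simp only; split_ifs <;> omega)
  right_inv y := Fin.ext (by simp only; split_ifs <;> omega)

lemma val_blockSwap (n m : ℕ) (x : Fin (n + m)) :
    (blockSwap n m x : ℕ) = if x < n then x + m else x - n :=
  rfl

lemma inversionCount_blockSwap (n m : ℕ) : inversionCount (blockSwap n m) = n * m := by
  have hinv : inversions (blockSwap n m) =
      ({x : Fin (n + m) | x.val < m} : Finset _) ×ˢ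
        ({y : Fin (n + m) | ¬ y.val < m} : Finset _) := by
    ext ⟨x, y⟩
    simp only [mem_inversions, mem_product, mem_filter_univ, Equiv.Perm.inv_def, blockSwap,
      Equiv.coe_fn_symm_mk, Fin.lt_def]
    split_ifs <;> omega
  have hsplit := card_filter_add_card_filter_not (s := (univ : Finset (Fin (n + m))))
    (fun y => y.val < m)
  rw [Fin.card_filter_val_lt, card_univ, Fintype.card_fin] at hsplit
  have hcompl : #{y : Fin (n + m) | ¬ y.val < m} = n := by omega
  rw [inversionCount, hinv, card_product, Fin.card_filter_val_lt, hcompl,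
    min_eq_right (by omega), mul_comm]

lemma inversionCount_longestPerm (n : ℕ) : inversionCount (longestPerm n) = n.choose 2 := by
  have : inversions (longestPerm n) =
      {p ∈ (univ : Finset (Fin n)) ×ˢ (univ : Finset (Fin n)) | p.1 < p.2} := by
    ext ⟨x, y⟩
    simp [mem_inversions, longestPerm]
  rw [inversionCount, this, card_product_filter_lt, card_fin]

lemma sgen_apply_of_lt {N i : ℕ} {x : Fin N} (h : i < x) : sgen N i x = x := by
  unfold sgen
  split_ifs
  · exact Equiv.swap_apply_of_ne_of_ne (Fin.ne_of_val_ne (by dsimp only; omega))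
      (Fin.ne_of_val_ne (by dsimp only; omega))
  · rfl

lemma sgen_castLE {m N i : ℕ} (hmN : m ≤ N) (hi : i < m) (x : Fin m) :
    sgen N i (Fin.castLE hmN x) = Fin.castLE hmN (sgen m i x) := by
  by_cases h : 0 < i
  · rw [sgen_eq_swap h (by omega), sgen_eq_swap h hi]
    simp only [Equiv.swap_apply_def]
    split_ifs <;> simp only [Fin.ext_iff, Fin.val_castLE] at * <;> omega
  · rw [sgen_eq_one (by omega), sgen_eq_one (by omega)]
    rfl

lemma prod_sgen_apply_of_lt {N : ℕ} {l : List ℕ} {x : Fin N} (hl : ∀ i ∈ l, i < x) :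
    (l.map (sgen N)).prod x = x := by
  induction l with
  | nil => rfl
  | cons i l ih =>
    simp only [List.map_cons, List.prod_cons, Equiv.Perm.mul_apply, List.forall_mem_cons] at hl ⊢
    rw [ih hl.2, sgen_apply_of_lt hl.1]

lemma prod_sgen_castLE {m N : ℕ} (hmN : m ≤ N) {l : List ℕ} (hl : ∀ i ∈ l, i < m)
    (x : Fin m) :
    (l.map (sgen N)).prod (Fin.castLE hmN x) = Fin.castLE hmN ((l.map (sgen m)).prod x) := by
  induction l with
  | nil => rfl
  | cons i l ih =>
    simp only [List.map_cons, List.prod_cons, Equiv.Perm.mul_apply, List.forall_mem_cons] at hl ⊢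
    rw [ih hl.2, sgen_castLE hmN hl.1]

lemma prod_sgen_append_eq_longestPerm {n m : ℕ} {ln lm lx : List ℕ}
    (hn : IsReducedWordFor n ln (longestPerm n)) (hm : IsReducedWordFor m lm (longestPerm m))
    (hx : (lx.map (sgen (n + m))).prod = blockSwap n m) :
    ((lm ++ lx ++ ln).map (sgen (n + m))).prod = longestPerm (n + m) := by
  have hln i (hi : i ∈ ln) : i < n := (pos_and_lt_of_mem_of_isReducedWordFor hn hi).2
  have hlm i (hi : i ∈ lm) : i < m := (pos_and_lt_of_mem_of_isReducedWordFor hm hi).2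
  ext x
  simp only [List.map_append, List.prod_append, Equiv.Perm.mul_apply, hx]
  by_cases hxn : x.val < n
  · obtain ⟨y, rfl⟩ : ∃ y : Fin n, Fin.castLE (Nat.le_add_right n m) y = x :=
      ⟨⟨x, hxn⟩, rfl⟩
    rw [prod_sgen_castLE _ hln, hn.1, prod_sgen_apply_of_lt (l := lm)]
    · simp only [val_blockSwap, longestPerm, Fin.revPerm_apply, Fin.val_castLE, Fin.val_rev]
      split_ifs <;> omega
    · intro i hi
      have := hlm i hi
      simp only [val_blockSwap, longestPerm, Fin.revPerm_apply, Fin.val_castLE, Fin.val_rev]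
      split_ifs <;> omega
  · rw [prod_sgen_apply_of_lt (l := ln) fun i hi => by have := hln i hi; omega]
    have hbx : blockSwap n m x = Fin.castLE (Nat.le_add_left m n) ⟨x - n, by omega⟩ :=
      Fin.ext (by simp [val_blockSwap, hxn])
    rw [hbx, prod_sgen_castLE _ hlm, hm.1]
    simp only [longestPerm, Fin.revPerm_apply, Fin.val_castLE, Fin.val_rev]
    omega

lemma Mmax_add_le (k n m : ℕ) : Mmax k n + Mmax k m ≤ Mmax k (n + m) := by
  obtain ⟨ln, hn, hcount_n⟩ := exists_isReducedWordFor_count_eq_Mmax k n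
  obtain ⟨lm, hm, hcount_m⟩ := exists_isReducedWordFor_count_eq_Mmax k m
  obtain ⟨lx, hx, hlen_x⟩ := exists_word_length_eq_inversionCount (blockSwap n m)
  have hred : IsReducedWordFor (n + m) (lm ++ lx ++ ln) (longestPerm (n + m)) := by
    refine isReducedWordFor_iff.mpr ⟨prod_sgen_append_eq_longestPerm hn hm hx, ?_⟩
    rw [inversionCount_longestPerm, Nat.add_choose_two, List.length_append, List.length_append,
      (isReducedWordFor_iff.mp hn).2, (isReducedWordFor_iff.mp hm).2, hlen_x,
      inversionCount_blockSwap, inversionCount_longestPerm, inversionCount_longestPerm]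
    ring
  have := count_le_Mmax (k := k) hred
  simp only [List.count_append] at this
  omega

open Filter in
theorem stmt4_general (k : ℕ) :
    ∃ c : ℝ, Tendsto (fun n : ℕ => (Mmax k n : ℝ) / n) atTop (nhds c) := by
  have hsub : Subadditive fun n => -(Mmax k n : ℝ) := fun n m => by
    have : (Mmax k n + Mmax k m : ℝ) ≤ Mmax k (n + m) := by exact_mod_cast Mmax_add_le k n m
    linarith
  have hbdd : BddBelow (Set.range fun n : ℕ => -(Mmax k n : ℝ) / n) := by
    refine ⟨-k, Set.forall_mem_range.mpr fun n => ?_⟩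
    rw [neg_div, neg_le_neg_iff]
    exact div_le_of_le_mul₀ n.cast_nonneg k.cast_nonneg (by exact_mod_cast Mmax_le_mul k n)
  refine ⟨-hsub.lim, ?_⟩
  simpa [neg_div] using (hsub.tendsto_lim hbdd).neg

open Filter in
theorem stmt4 (k : ℕ) (hk : 0 < k) :
    ∃ c : ℝ, Tendsto (fun n : ℕ => (Mmax k n : ℝ) / n) atTop (nhds c) :=
  stmt4_general k
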